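/- Let V be a finite-dimensional complex vector space, regarded also as a real vector space, and let End_ℂ(V) denote its complex-linear endomorphisms. An ℝ-bilinear alternating map T : V × V → V can be written in the form T(x, y) = A(x)y − A(y)x for some ℝ-linear map A : V → End_ℂ(V) if and only if T(x, y) − T(ix, iy) = −i·T(ix, y) − i·T(x, iy) for all x, y ∈ V. -/
import Mathlib

lemma csmul_decomp {V : Type*} [AddCommGroup V] [Module ℂ V] (c : ℂ) (y : V) :
    c • y = c.re • y + c.im • (Complex.I • y) := by
  rw [← Complex.re_add_im c, add_smul, mul_smul]
  simp

/-- Upgrade an ℝ-linear map commuting with `I` to a ℂ-linear map. -/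
def ofRealI {V : Type*} [AddCommGroup V] [Module ℂ V] (f : V →ₗ[ℝ] V)
    (hf : ∀ y, f (Complex.I • y) = Complex.I • f y) : V →ₗ[ℂ] V where
  toFun := f
  map_add' := f.map_add
  map_smul' c y := by
    simp only [RingHom.id_apply, csmul_decomp c (f y), csmul_decomp c y, map_add,
      LinearMap.map_smul, hf]

theorem mem_coboundary_iff_integrability
    (V : Type*) [AddCommGroup V] [Module ℂ V] [FiniteDimensional ℂ V]
    (T : V →ₗ[ℝ] V →ₗ[ℝ] V) (halt : ∀ x : V, T x x = 0) :
    (∃ A : V →ₗ[ℝ] (V →ₗ[ℂ] V), ∀ x y : V, T x y = A x y - A y x) ↔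
    (∀ x y : V,
      T x y - T (Complex.I • x) (Complex.I • y)
        = - (Complex.I • T (Complex.I • x) y) - Complex.I • T x (Complex.I • y)) := by
  have hskew : ∀ x y : V, T y x = - T x y := by
    intro x y
    have h : T y x + T x y = 0 := by
      simpa [map_add, halt] using halt (x + y)
    exact eq_neg_of_add_eq_zero_left h
  constructor
  · rintro ⟨A, hA⟩ x y
    simp only [hA, map_smul]
    match_scalars <;> (ring_nf; try simp [Complex.I_sq]; try ring)
  · intro hint
    set J : V →ₗ[ℝ] V := Complex.I • (LinearMap.id : V →ₗ[ℝ] V) with hJ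
    set A0 : V →ₗ[ℝ] V →ₗ[ℝ] V :=
      (8:ℝ)⁻¹ • ((3:ℝ) • T + Complex.I • (T ∘ₗ J) - (3:ℝ) • (Complex.I • (T.compl₂ J))
        + (T ∘ₗ J).compl₂ J) with hA0
    have hA0app : ∀ x y : V, A0 x y = (8:ℝ)⁻¹ • ((3:ℝ) • T x y
        + Complex.I • T (Complex.I • x) y
        - (3:ℝ) • (Complex.I • T x (Complex.I • y))
        + T (Complex.I • x) (Complex.I • y)) := by
      intro x y
      simp [hA0, hJ]
    have hII : ∀ v : V, Complex.I • Complex.I • v = -v := fun v => by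
      rw [smul_smul, Complex.I_mul_I, neg_one_smul]
    have hI : ∀ x y : V, A0 x (Complex.I • y) = Complex.I • A0 x y := by
      intro x y
      rw [hA0app, hA0app, hII y]
      simp only [map_neg, smul_neg]
      match_scalars <;> (ring_nf; try simp [Complex.I_sq]; try ring)
    refine ⟨{ toFun := fun x => ofRealI (A0 x) (hI x),
              map_add' := ?_, map_smul' := ?_ }, ?_⟩
    · intro x y; ext z; simp [ofRealI, map_add]
    · intro c x; ext z; simp [ofRealI]
    · intro x y
      show T x y = A0 x y - A0 y x
      have h := hint x y
      rw [sub_eq_iff_eq_add] at h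
      have h2 : T (Complex.I • x) (Complex.I • y)
          = T x y + Complex.I • T (Complex.I • x) y + Complex.I • T x (Complex.I • y) := by
        rw [h]; abel
      rw [hA0app, hA0app, hskew x y, hskew x (Complex.I • y), hskew (Complex.I • x) y,
        hskew (Complex.I • x) (Complex.I • y), h2]
      module
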